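/- arXiv:0810.3718 — 9 statements merged into one kernel-verified Lean document; each statement's English description precedes it below -/
import Mathlib

section
/- Let c ∈ [1, 5/2], set β = 2(1 − c/3), and let μ > 0. Suppose the real sequence (A_j)_{j≥0} solves the rescaled steady-state system and A_j → 0 as j → ∞. Then the series Σ_{j=0}^∞ 2^{βj} A_j² converges and μ · Σ_{j=0}^∞ 2^{βj} A_j² = A_0. -/
open Filter

/-- The rescaled steady-state system for the viscous dyadic model:
`A_{j-1}² - A_j A_{j+1} = μ 2^{βj} A_j` for `j ≥ 1`, and `-A_0 A_1 = μ A_0 - 1`. -/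
def SteadyState (β μ : ℝ) (A : ℕ → ℝ) : Prop :=
  (∀ j : ℕ, A j ^ 2 - A (j + 1) * A (j + 2) = μ * (2 : ℝ) ^ (β * ((j : ℝ) + 1)) * A (j + 1)) ∧
  -(A 0 * A 1) = μ * A 0 - 1

theorem stmt_0 (c β μ : ℝ) (hc : c ∈ Set.Icc (1 : ℝ) (5 / 2))
    (hβ : β = 2 * (1 - c / 3)) (hμ : 0 < μ) (A : ℕ → ℝ)
    (hA : SteadyState β μ A) (hlim : Tendsto A atTop (nhds 0)) :
    Summable (fun j : ℕ => (2 : ℝ) ^ (β * (j : ℝ)) * A j ^ 2) ∧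
    μ * ∑' j : ℕ, (2 : ℝ) ^ (β * (j : ℝ)) * A j ^ 2 = A 0 := by
  obtain ⟨h1, h0⟩ := hA
  set f : ℕ → ℝ := fun j => (2 : ℝ) ^ (β * (j : ℝ)) * A j ^ 2 with hf
  have hfnn : ∀ j, 0 ≤ f j := fun j => mul_nonneg (by positivity) (sq_nonneg _)
  have key : ∀ n, μ * ∑ j ∈ Finset.range (n + 1), f j = A 0 - A n ^ 2 * A (n + 1) := by
    intro n
    induction n with
    | zero =>
      simp only [zero_add, Finset.sum_range_one, hf, Nat.cast_zero, mul_zero,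
        Real.rpow_zero, one_mul]
      linear_combination -A 0 * h0
    | succ n ih =>
      rw [Finset.sum_range_succ, mul_add, ih]
      have e : μ * f (n + 1) = A n ^ 2 * A (n + 1) - A (n + 1) ^ 2 * A (n + 2) := by
        simp only [hf]
        push_cast
        linear_combination -A (n + 1) * h1 n
      linarith
  have hb : Tendsto (fun n => A n ^ 2 * A (n + 1)) atTop (nhds 0) := by
    have := (hlim.pow 2).mul (hlim.comp (tendsto_add_atTop_nat 1))
    simpa using this
  have hS1 : Tendsto (fun n => ∑ j ∈ Finset.range (n + 1), f j) atTop (nhds (A 0 / μ)) := by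
    have : Tendsto (fun n => (A 0 - A n ^ 2 * A (n + 1)) / μ) atTop (nhds ((A 0 - 0) / μ)) :=
      (tendsto_const_nhds.sub hb).div_const μ
    simp only [sub_zero] at this
    refine this.congr fun n => ?_
    field_simp
    linarith [key n]
  have hS : Tendsto (fun n => ∑ j ∈ Finset.range n, f j) atTop (nhds (A 0 / μ)) := by
    rwa [← tendsto_add_atTop_iff_nat 1]
  have hsum : HasSum f (A 0 / μ) :=
    (hasSum_iff_tendsto_nat_of_nonneg hfnn _).2 hS
  refine ⟨hsum.summable, ?_⟩
  rw [hsum.tsum_eq]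
  field_simp
end

section
/- Let c ∈ [1, 5/2], set β = 2(1 − c/3), and let μ > 0. Suppose the real sequence (A_j)_{j≥0} solves the rescaled steady-state system and A_j → 0 as j → ∞. Then for every integer J ≥ 1, the series Σ_{j=J}^∞ 2^{βj} A_j² converges and μ · Σ_{j=J}^∞ 2^{βj} A_j² = A_{J−1}² A_J. -/
open Filter

open Topology

/-!
Multiplying the `j`-th equation of the system by `A_j` turns it into an energy balance: the
dissipation `μ 2^{βj} A_j²` at shell `j` equals the flux `A_{j-1}² A_j` entering it minus the flux
`A_j² A_{j+1}` leaving it. Summing from `J` on, the sum telescopes, and the outgoing flux tends to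
`0` because `A_j → 0`; the terms are nonnegative, so the partial sums converge unconditionally.
-/

theorem hasSum_of_nonneg_of_eq_sub_succ {u g : ℕ → ℝ} {l : ℝ} (hu : ∀ k, 0 ≤ u k)
    (hug : ∀ k, u k = g k - g (k + 1)) (hg : Tendsto g atTop (𝓝 l)) :
    HasSum u (g 0 - l) := by
  refine (hasSum_iff_tendsto_nat_of_nonneg hu _).mpr ?_
  simp only [hug, Finset.sum_range_sub']
  exact tendsto_const_nhds.sub hg

theorem tendsto_sq_mul_succ_nhds_zero {A : ℕ → ℝ} (hlim : Tendsto A atTop (𝓝 0)) :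
    Tendsto (fun n => A n ^ 2 * A (n + 1)) atTop (𝓝 0) := by
  simpa using (hlim.pow 2).mul (hlim.comp (tendsto_add_atTop_nat 1))

namespace SteadyState

variable {β μ : ℝ} {A : ℕ → ℝ}

theorem dissipation_eq_flux_sub (hA : SteadyState β μ A) (j : ℕ) :
    μ * ((2 : ℝ) ^ (β * ((j : ℝ) + 1)) * A (j + 1) ^ 2)
      = A j ^ 2 * A (j + 1) - A (j + 1) ^ 2 * A (j + 2) := by
  linear_combination (-A (j + 1)) * hA.1 j

theorem hasSum_dissipation (hA : SteadyState β μ A) (hμ : 0 ≤ μ)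
    (hlim : Tendsto A atTop (𝓝 0)) (J : ℕ) :
    HasSum (fun k : ℕ => μ * ((2 : ℝ) ^ (β * (((J + 1 : ℕ) : ℝ) + k)) * A (J + 1 + k) ^ 2))
      (A J ^ 2 * A (J + 1)) := by
  have hflux : Tendsto (fun n => A (n + J) ^ 2 * A (n + J + 1)) atTop (𝓝 0) :=
    (tendsto_sq_mul_succ_nhds_zero hlim).comp (tendsto_add_atTop_nat J)
  have hstep (k : ℕ) : μ * ((2 : ℝ) ^ (β * (((J + 1 : ℕ) : ℝ) + k)) * A (J + 1 + k) ^ 2)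
      = A (k + J) ^ 2 * A (k + J + 1) - A (k + 1 + J) ^ 2 * A (k + 1 + J + 1) := by
    have h := hA.dissipation_eq_flux_sub (k + J)
    rw [show J + 1 + k = k + J + 1 by ring, show k + 1 + J = k + J + 1 by ring]
    push_cast at h ⊢
    rwa [show (J : ℝ) + 1 + k = k + J + 1 by ring]
  simpa using hasSum_of_nonneg_of_eq_sub_succ (fun k => by positivity) hstep hflux

end SteadyState

theorem stmt_1_general (β μ : ℝ) (hμ : 0 < μ) (A : ℕ → ℝ)
    (hA : SteadyState β μ A) (hlim : Tendsto A atTop (nhds 0)) :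
    ∀ J : ℕ, 1 ≤ J →
      Summable (fun k : ℕ => (2 : ℝ) ^ (β * ((J : ℝ) + (k : ℝ))) * A (J + k) ^ 2) ∧
      μ * ∑' k : ℕ, (2 : ℝ) ^ (β * ((J : ℝ) + (k : ℝ))) * A (J + k) ^ 2
        = A (J - 1) ^ 2 * A J := by
  intro J hJ
  obtain ⟨P, rfl⟩ : ∃ P, J = P + 1 := ⟨J - 1, (Nat.succ_pred_eq_of_pos hJ).symm⟩
  have h := hA.hasSum_dissipation hμ.le hlim P
  refine ⟨(summable_mul_left_iff hμ.ne').mp h.summable, ?_⟩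
  rw [← tsum_mul_left, h.tsum_eq, Nat.add_sub_cancel]

theorem stmt_1 (c β μ : ℝ) (hc : c ∈ Set.Icc (1 : ℝ) (5 / 2))
    (hβ : β = 2 * (1 - c / 3)) (hμ : 0 < μ) (A : ℕ → ℝ)
    (hA : SteadyState β μ A) (hlim : Tendsto A atTop (nhds 0)) :
    ∀ J : ℕ, 1 ≤ J →
      Summable (fun k : ℕ => (2 : ℝ) ^ (β * ((J : ℝ) + (k : ℝ))) * A (J + k) ^ 2) ∧
      μ * ∑' k : ℕ, (2 : ℝ) ^ (β * ((J : ℝ) + (k : ℝ))) * A (J + k) ^ 2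
        = A (J - 1) ^ 2 * A J :=
  stmt_1_general β μ hμ A hA hlim
end

section
/- Let c ∈ [1, 5/2], set β = 2(1 − c/3), and let μ > 0. Suppose the real sequence (A_j)_{j≥0} solves the rescaled steady-state system and A_j → 0 as j → ∞. Then A_j > 0 for every j ≥ 0. -/
open Filter

theorem stmt_2 (c β μ : ℝ) (hc : c ∈ Set.Icc (1 : ℝ) (5 / 2))
    (hβ : β = 2 * (1 - c / 3)) (hμ : 0 < μ) (A : ℕ → ℝ)
    (hA : SteadyState β μ A) (hlim : Tendsto A atTop (nhds 0)) :
    ∀ j : ℕ, 0 < A j := by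
  obtain ⟨heq, h0⟩ := hA
  have hβ0 : 0 ≤ β := by
    obtain ⟨h1, h2⟩ := hc; rw [hβ]; linarith
  have hpow : ∀ n : ℕ, (1 : ℝ) ≤ (2 : ℝ) ^ (β * ((n : ℝ) + 1)) := by
    intro n
    calc (1 : ℝ) = (2 : ℝ) ^ (0 : ℝ) := (Real.rpow_zero 2).symm
    _ ≤ _ := Real.rpow_le_rpow_of_exponent_le (by norm_num) (by positivity)
  -- no term vanishes
  have hne : ∀ n, A n ≠ 0 := by
    intro n
    induction n with
    | zero =>
      intro h
      rw [h] at h0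
      norm_num at h0
    | succ k ih =>
      intro h
      have h2 := heq k
      rw [h] at h2
      simp at h2
      exact ih h2
  -- the key product identity
  have hprod : ∀ n : ℕ,
      0 < A (n + 1) * (A (n + 2) + μ * (2 : ℝ) ^ (β * ((n : ℝ) + 1))) := by
    intro n
    have hId : A (n + 1) * (A (n + 2) + μ * (2 : ℝ) ^ (β * ((n : ℝ) + 1))) = A n ^ 2 := by
      linear_combination -(heq n)
    rw [hId]
    exact lt_of_le_of_ne (sq_nonneg _) (Ne.symm (pow_ne_zero 2 (hne n)))
  -- negativity propagates
  have hstep : ∀ n : ℕ, A (n + 1) < 0 → A (n + 2) < -μ := by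
    intro n h
    have hp := hprod n
    have hneg : A (n + 2) + μ * (2 : ℝ) ^ (β * ((n : ℝ) + 1)) < 0 := by
      by_contra hc'
      push_neg at hc'
      nlinarith [mul_nonneg (le_of_lt (neg_pos.mpr h)) hc']
    nlinarith [hpow n, mul_le_mul_of_nonneg_left (hpow n) hμ.le]
  have hpos1 : ∀ n : ℕ, 0 < A (n + 1) := by
    intro n
    by_contra hle
    push_neg at hle
    have hlt : A (n + 1) < 0 := lt_of_le_of_ne hle (hne (n + 1))
    have hall : ∀ k : ℕ, A (n + 2 + k) < -μ := by
      intro k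
      induction k with
      | zero => simpa using hstep n hlt
      | succ m ih =>
        have hneg2 : A (n + 1 + m + 1) < 0 := by
          have : n + 1 + m + 1 = n + 2 + m := by omega
          rw [this]
          linarith
        have := hstep (n + 1 + m) hneg2
        have he : n + 1 + m + 2 = n + 2 + (m + 1) := by omega
        rwa [he] at this
    have hev : ∀ᶠ k in atTop, -μ < A k :=
      hlim.eventually (eventually_gt_nhds (by linarith))
    obtain ⟨N, hN⟩ := Filter.eventually_atTop.mp hev
    have h1 := hall N
    have h2 := hN (n + 2 + N) (by omega)
    linarith
  intro j
  cases j with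
  | zero =>
    have h1 := hpos1 0
    by_contra h
    push_neg at h
    nlinarith [mul_nonneg (neg_nonneg.mpr h) h1.le, mul_nonneg hμ.le (neg_nonneg.mpr h)]
  | succ n => exact hpos1 n
end

section
/- Let c ∈ [1, 5/2), set β = 2(1 − c/3) (so β > 0), and let μ > 0. Suppose the real sequence (A_j)_{j≥0} solves the rescaled steady-state system and A_j → 0 as j → ∞. Then A_j decays super-exponentially: for every λ > 0, 2^{λj} A_j → 0 as j → ∞; in particular Σ_{j=0}^∞ 2^{2js} A_j² < ∞ for every s > 0. -/
open Filter

theorem stmt_4 (c β μ : ℝ) (hc : c ∈ Set.Ico (1 : ℝ) (5 / 2))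
    (hβ : β = 2 * (1 - c / 3)) (hμ : 0 < μ) (A : ℕ → ℝ)
    (hA : SteadyState β μ A) (hlim : Tendsto A atTop (nhds 0)) :
    (∀ l : ℝ, 0 < l →
      Tendsto (fun j : ℕ => (2 : ℝ) ^ (l * (j : ℝ)) * A j) atTop (nhds 0)) ∧
    (∀ s : ℝ, 0 < s → Summable (fun j : ℕ => (2 : ℝ) ^ (2 * (j : ℝ) * s) * A j ^ 2)) := by
  obtain ⟨heq, -⟩ := hA
  have hβpos : 0 < β := by rw [hβ]; nlinarith [hc.2]
  -- key inequality
  have key : ∀ j : ℕ, μ * |A (j+1)| ≤ |A j| ^ 2 + |A (j+1)| * |A (j+2)| := by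
    intro j
    have h := heq j
    have hpow : (1:ℝ) ≤ (2:ℝ) ^ (β * ((j:ℝ)+1)) := by
      apply Real.one_le_rpow one_le_two
      positivity
    have hstep : μ * (2:ℝ) ^ (β * ((j:ℝ)+1)) * |A (j+1)| ≤ |A j| ^ 2 + |A (j+1)| * |A (j+2)| := by
      have h2 : |μ * (2:ℝ) ^ (β * ((j:ℝ)+1)) * A (j+1)| = μ * (2:ℝ) ^ (β * ((j:ℝ)+1)) * |A (j+1)| := by
        rw [abs_mul, abs_of_pos (by positivity)]
      rw [← h2, ← h]
      calc |A j ^ 2 - A (j+1) * A (j+2)| ≤ |A j ^ 2| + |A (j+1) * A (j+2)| := abs_sub _ _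
        _ = |A j| ^ 2 + |A (j+1)| * |A (j+2)| := by rw [abs_pow, abs_mul]
    nlinarith [mul_nonneg (mul_nonneg (sub_nonneg.mpr hpow) hμ.le) (abs_nonneg (A (j+1)))]
  -- geometric decay with arbitrary ratio
  have geo : ∀ r : ℝ, 0 < r → ∃ N : ℕ, ∀ j : ℕ, N ≤ j → |A (j+1)| ≤ r * |A j| := by
    intro r hr
    have hδ : 0 < min (μ/2) (r*μ/2) := by positivity
    obtain ⟨N, hN⟩ := Metric.tendsto_atTop.mp hlim _ hδ
    refine ⟨N, fun j hj => ?_⟩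
    have hj2 : |A (j+2)| ≤ μ/2 := by
      have := hN (j+2) (by omega)
      rw [Real.dist_eq, sub_zero] at this
      exact le_trans this.le (min_le_left _ _)
    have hj0 : |A j| ≤ r*μ/2 := by
      have := hN j hj
      rw [Real.dist_eq, sub_zero] at this
      exact le_trans this.le (min_le_right _ _)
    have hk := key j
    nlinarith [abs_nonneg (A (j+1)), abs_nonneg (A j)]
  have part1 : ∀ l : ℝ, 0 < l →
      Tendsto (fun j : ℕ => (2 : ℝ) ^ (l * (j : ℝ)) * A j) atTop (nhds 0) := by
    intro l hl
    have hr : (0:ℝ) < (2:ℝ) ^ (-(l+1)) := Real.rpow_pos_of_pos two_pos _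
    obtain ⟨N, hN⟩ := geo _ hr
    -- |A (N+k)| ≤ r^k * |A N|
    have hind : ∀ k : ℕ, |A (N+k)| ≤ ((2:ℝ) ^ (-(l+1))) ^ k * |A N| := by
      intro k
      induction k with
      | zero => simp
      | succ k ih =>
        have := hN (N+k) (by omega)
        calc |A (N+(k+1))| = |A ((N+k)+1)| := by ring_nf
          _ ≤ (2:ℝ) ^ (-(l+1)) * |A (N+k)| := this
          _ ≤ (2:ℝ) ^ (-(l+1)) * (((2:ℝ) ^ (-(l+1))) ^ k * |A N|) := by
              exact mul_le_mul_of_nonneg_left ih hr.le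
          _ = ((2:ℝ) ^ (-(l+1))) ^ (k+1) * |A N| := by ring
    set C : ℝ := (2:ℝ) ^ (l * (N:ℝ)) * |A N| * 2 ^ N with hC
    have hCnn : 0 ≤ C := by positivity
    have hg : Tendsto (fun j : ℕ => C * (1/2:ℝ)^j) atTop (nhds 0) := by
      have : Tendsto (fun j : ℕ => (1/2:ℝ)^j) atTop (nhds 0) :=
        tendsto_pow_atTop_nhds_zero_of_lt_one (by norm_num) (by norm_num)
      simpa using this.const_mul C
    refine squeeze_zero_norm' ?_ hg
    · filter_upwards [eventually_ge_atTop N] with j hj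
      obtain ⟨k, rfl⟩ := Nat.exists_eq_add_of_le hj
      have hpos : (0:ℝ) < (2:ℝ) ^ (l * ((N+k:ℕ):ℝ)) := Real.rpow_pos_of_pos two_pos _
      rw [Real.norm_eq_abs, abs_mul, abs_of_pos hpos]
      calc (2:ℝ) ^ (l * ((N+k:ℕ):ℝ)) * |A (N+k)|
          ≤ (2:ℝ) ^ (l * ((N+k:ℕ):ℝ)) * (((2:ℝ) ^ (-(l+1))) ^ k * |A N|) :=
            mul_le_mul_of_nonneg_left (hind k) hpos.le
        _ = C * (1/2:ℝ)^(N+k) := by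
            have L : (2:ℝ) ^ (l * ((N+k:ℕ):ℝ)) * (((2:ℝ) ^ (-(l+1))) ^ k * |A N|)
                = (2:ℝ) ^ (l * (N:ℝ) - (k:ℝ)) * |A N| := by
              rw [← Real.rpow_natCast ((2:ℝ) ^ (-(l+1))) k, ← Real.rpow_mul two_pos.le,
                ← mul_assoc, ← Real.rpow_add two_pos]
              congr 2
              push_cast
              ring
            have R : C * (1/2:ℝ)^(N+k) = (2:ℝ) ^ (l * (N:ℝ) - (k:ℝ)) * |A N| := by
              rw [hC, show (1/2:ℝ) = (2:ℝ)^(-1:ℝ) by rw [Real.rpow_neg_one]; norm_num,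
                ← Real.rpow_natCast ((2:ℝ)^(-1:ℝ)) (N+k), ← Real.rpow_mul two_pos.le,
                ← Real.rpow_natCast (2:ℝ) N]
              rw [mul_comm ((2:ℝ) ^ (l * (N:ℝ))) |A N|, mul_assoc, mul_assoc,
                ← Real.rpow_add two_pos, ← Real.rpow_add two_pos, mul_comm]
              congr 2
              push_cast
              ring
            rw [L, R]
  refine ⟨part1, fun s hs => ?_⟩
  have ht := part1 (s+1) (by linarith)
  obtain ⟨N, hN⟩ := Metric.tendsto_atTop.mp ht 1 one_pos
  rw [← summable_nat_add_iff N]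
  have hsum : Summable (fun j : ℕ => (1/4:ℝ)^j) :=
    summable_geometric_of_lt_one (by norm_num) (by norm_num)
  refine Summable.of_nonneg_of_le (fun j => by positivity) (fun j => ?_) hsum
  have h1 : |(2:ℝ) ^ ((s+1) * ((j+N:ℕ):ℝ)) * A (j+N)| ≤ 1 := by
    have := hN (j+N) (by omega)
    rw [Real.dist_eq, sub_zero] at this
    exact this.le
  have hkey : (2:ℝ) ^ (2 * ((j+N:ℕ):ℝ) * s) * A (j+N) ^ 2
      = ((2:ℝ) ^ ((s+1) * ((j+N:ℕ):ℝ)) * A (j+N)) ^ 2 * ((1/4:ℝ)^(j+N)) := by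
    rw [show (1/4:ℝ) = (2:ℝ)^(-2:ℝ) by
      rw [show (-2:ℝ) = -(2:ℝ) from rfl, Real.rpow_neg two_pos.le]
      norm_num [Real.rpow_two]]
    rw [← Real.rpow_natCast ((2:ℝ)^(-2:ℝ)) (j+N), ← Real.rpow_mul two_pos.le]
    rw [mul_pow, ← Real.rpow_natCast ((2:ℝ) ^ ((s+1) * ((j+N:ℕ):ℝ))) 2,
      ← Real.rpow_mul two_pos.le]
    conv_rhs => rw [mul_right_comm]
    rw [← Real.rpow_add two_pos]
    congr 2
    push_cast
    ring
  calc (2:ℝ) ^ (2 * ((j+N:ℕ):ℝ) * s) * A (j+N) ^ 2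
      = ((2:ℝ) ^ ((s+1) * ((j+N:ℕ):ℝ)) * A (j+N)) ^ 2 * ((1/4:ℝ)^(j+N)) := hkey
    _ ≤ 1 * ((1/4:ℝ)^(j+N)) := by
        apply mul_le_mul_of_nonneg_right _ (by positivity)
        calc ((2:ℝ) ^ ((s+1) * ((j+N:ℕ):ℝ)) * A (j+N)) ^ 2
            = |(2:ℝ) ^ ((s+1) * ((j+N:ℕ):ℝ)) * A (j+N)| ^ 2 := (sq_abs _).symm
          _ ≤ 1 ^ 2 := by apply pow_le_pow_left₀ (abs_nonneg _) h1
          _ = 1 := one_pow 2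
    _ ≤ (1/4:ℝ)^j := by
        rw [one_mul, pow_add]
        nlinarith [pow_nonneg (by norm_num : (0:ℝ) ≤ 1/4) j, pow_le_one₀ (by norm_num : (0:ℝ) ≤ 1/4) (by norm_num : (1/4:ℝ) ≤ 1) (n := N)]
end

section
/- Let c ∈ (3/2, 5/2], set β = 2(1 − c/3) (so 0 < β < 1), and let μ > 0. Then every solution (A_j)_{j≥0} of the rescaled steady-state system with A_j → 0 as j → ∞ is strictly monotonically decreasing: A_{j−1} > A_j for all j ≥ 1. -/
open Filter

theorem stmt_5 (c β μ : ℝ) (hc : c ∈ Set.Ioc (3 / 2 : ℝ) (5 / 2))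
    (hβ : β = 2 * (1 - c / 3)) (hμ : 0 < μ) (A : ℕ → ℝ)
    (hA : SteadyState β μ A) (hlim : Tendsto A atTop (nhds 0))
    (hpos : ∀ j : ℕ, 0 < A j) :
    ∀ j : ℕ, A (j + 1) < A j := by
  classical
  obtain ⟨hc1, hc2⟩ := hc
  have hβ0 : 0 < β := by rw [hβ]; linarith
  have hβ1 : β < 1 := by rw [hβ]; linarith
  have h2β : (2:ℝ) ^ β < 2 := by
    calc (2:ℝ)^β < 2^(1:ℝ) := Real.rpow_lt_rpow_of_exponent_lt one_lt_two hβ1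
    _ = 2 := Real.rpow_one 2
  have h2β1 : (1:ℝ) < (2:ℝ)^β := by
    calc (1:ℝ) = (2:ℝ)^(0:ℝ) := (Real.rpow_zero 2).symm
    _ < 2^β := Real.rpow_lt_rpow_of_exponent_lt one_lt_two hβ0
  obtain ⟨heq, -⟩ := hA
  by_contra hcon
  push_neg at hcon
  obtain ⟨j0, hj0⟩ := hcon
  -- key: if A k ≤ A (k+1) then A (k+2) + μ 2^{β(k+1)} ≤ A k
  have key : ∀ k : ℕ, A k ≤ A (k+1) → A (k+2) + μ * 2 ^ (β*((k:ℝ)+1)) ≤ A k := by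
    intro k hk
    have h1 := heq k
    have h2 := hpos k
    have h3 := hpos (k+1)
    have h4 := hpos (k+2)
    have h5 : (0:ℝ) < μ * 2 ^ (β*((k:ℝ)+1)) := by positivity
    nlinarith [mul_le_mul_of_nonneg_right hk (le_of_lt (add_pos h4 h5))]
  have hlow : ∀ k : ℕ, A k ≤ A (k+1) → μ * 2 ^ β ≤ A k := by
    intro k hk
    have h1 := key k hk
    have h4 := hpos (k+2)
    have h2 : (2:ℝ)^β ≤ 2 ^ (β*((k:ℝ)+1)) := by
      apply Real.rpow_le_rpow_of_exponent_le one_le_two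
      nlinarith [(Nat.cast_nonneg k : (0:ℝ) ≤ k)]
    nlinarith
  have hev : ∀ᶠ k in atTop, A k < μ * 2 ^ β :=
    hlim.eventually (gt_mem_nhds (by positivity))
  obtain ⟨N, hN⟩ := eventually_atTop.1 hev
  have hbound : ∀ k : ℕ, A k ≤ A (k+1) → k ≤ N := by
    intro k hk
    by_contra h
    push_neg at h
    exact absurd (hlow k hk) (not_le.2 (hN k h.le))
  set P : ℕ → Prop := fun k => A k ≤ A (k+1) with hPdef
  have hj0N : j0 ≤ N := hbound j0 hj0
  set K := Nat.findGreatest P N with hKdef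
  have hPK : P K := Nat.findGreatest_spec hj0N hj0
  have hgt : ∀ k : ℕ, K < k → A (k+1) < A k := by
    intro k hk
    by_contra h
    push_neg at h
    exact Nat.findGreatest_is_greatest hk (hbound k h) h
  -- set up the contradiction at K
  set m := μ * 2 ^ (β*((K:ℝ)+1)) with hmdef
  have hmpos : 0 < m := by positivity
  have hkey : A (K+2) + m ≤ A K := key K hPK
  have hx : A K ≤ A (K+1) := hPK
  have hK2pos := hpos (K+2)
  have hK2le : A (K+2) ≤ A (K+1) - m := by linarith
  have hK3 : A (K+3) < A (K+2) := hgt (K+2) (by omega)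
  have hK3pos := hpos (K+3)
  have heq1 := heq (K+1)
  push_cast at heq1
  have hexp : μ * (2:ℝ) ^ (β*(((K:ℝ)+1)+1)) = 2^β * m := by
    rw [hmdef, show β*(((K:ℝ)+1)+1) = β*((K:ℝ)+1) + β by ring,
      Real.rpow_add two_pos]
    ring
  have heq2 : A (K+1) ^ 2 = A (K+2) * A (K+3) + (2^β * m) * A (K+2) := by
    have h3 : A (K+1+1) = A (K+2) := rfl
    have h4 : A (K+1+2) = A (K+3) := rfl
    nlinarith [heq1, hexp]
  -- x := A (K+1), c := A (K+2): x² < c² + 2^β m c ≤ (x-m)² + 2^β m (x-m) < x²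
  have hxm : m < A (K+1) := by linarith
  nlinarith [mul_lt_mul_of_pos_left hK3 hK2pos,
    mul_le_mul_of_nonneg_right hK2le (le_of_lt hK2pos),
    mul_pos hK2pos hmpos, mul_pos hmpos hmpos,
    mul_lt_mul_of_pos_right h2β hmpos,
    mul_le_mul_of_nonneg_left hK2le (le_of_lt (by positivity : (0:ℝ) < 2^β * m))]
end

section
/- Let c ∈ (3/2, 5/2] and set β = 2(1 − c/3). Then for every j ≥ 0 and every ε > 0 there exists δ > 0 such that for all μ ∈ (0, δ) and every solution (A_k)_{k≥0} of the rescaled steady-state system with parameter μ satisfying A_k → 0 as k → ∞, one has |A_j − 1| < ε. In other words, every entry of the fixed point converges to 1 as μ → 0⁺. -/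
open Filter Topology

/-! Prepending the entry `1` to `A` turns the system into the single recurrence
`B n ^ 2 = B (n + 1) * (B (n + 2) + a n)` with weights `μ ≤ a n ≤ μ 2 ^ n`. Since `B → 0`, all
entries are positive. If at some index `m` with `B m ≥ 1` the ratio `B m / B (m + 1)` is at
least `1 + τ` with `μ 2 ^ m ≲ τ ²`, then the recurrence squares this ratio every two steps and
keeps `B (m + 2 k) ≥ 1`, contradicting `B → 0`. Hence a deviation `|B (t + 1) - 1| ≥ s` cannot
follow a deviation `|B t - 1| < s / 5` once `μ` is small, and induction along the first
`j + 1` entries gives `|A j - 1| < ε`. -/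

def DyadicRecurrence (a B : ℕ → ℝ) : Prop :=
  ∀ n, B n ^ 2 = B (n + 1) * (B (n + 2) + a n)

def prependOne (A : ℕ → ℝ) : ℕ → ℝ
  | 0 => 1
  | n + 1 => A n

theorem SteadyState.dyadicRecurrence {β μ : ℝ} {A : ℕ → ℝ} (h : SteadyState β μ A) :
    DyadicRecurrence (fun n : ℕ => μ * (2 : ℝ) ^ (β * n)) (prependOne A)
  | 0 => by simp only [prependOne, Nat.cast_zero, mul_zero, Real.rpow_zero]; linarith [h.2]
  | n + 1 => by simp only [prependOne]; push_cast; linarith [h.1 n]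

theorem two_rpow_mul_natCast_mem_Icc {β : ℝ} (hβ0 : 0 ≤ β) (hβ1 : β ≤ 1) (n : ℕ) :
    (2 : ℝ) ^ (β * n) ∈ Set.Icc 1 (2 ^ n) := by
  refine ⟨Real.one_le_rpow one_le_two (by positivity), ?_⟩
  rw [← Real.rpow_natCast]
  exact Real.rpow_le_rpow_of_exponent_le one_le_two (mul_le_of_le_one_left n.cast_nonneg hβ1)

theorem four_pow_mul_sq_le {τ : ℝ} (hτ0 : 0 ≤ τ) (hτ4 : τ ≤ 4) :
    ∀ k : ℕ, 4 ^ k * τ ^ 2 ≤ 4 * ((1 + τ) ^ 2 ^ k - 1)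
  | 0 => by simp only [pow_zero, pow_one, one_mul]; nlinarith
  | k + 1 => by
    have hbern : 1 + 2 ^ k * τ ≤ (1 + τ) ^ 2 ^ k := by
      simpa using one_add_mul_le_pow (by linarith : (-2 : ℝ) ≤ τ) (2 ^ k)
    have hsq : (1 + 2 ^ k * τ) ^ 2 ≤ ((1 + τ) ^ 2 ^ k) ^ 2 := by gcongr
    have h4 : (4 : ℝ) ^ k = (2 ^ k) ^ 2 := by rw [← pow_mul, mul_comm, pow_mul]; norm_num
    rw [pow_succ 2 k, pow_mul, pow_succ, h4]
    nlinarith [mul_nonneg (pow_nonneg zero_le_two k) hτ0]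

namespace DyadicRecurrence

variable {a B : ℕ → ℝ}

theorem ne_zero (h : DyadicRecurrence a B) (h0 : B 0 ≠ 0) : ∀ n, B n ≠ 0
  | 0 => h0
  | n + 1 => fun hn => ne_zero h h0 n (by simpa [hn] using h n)

theorem lt_neg_of_neg (h : DyadicRecurrence a B) {n : ℕ} (hn : B n ≠ 0) (hneg : B (n + 1) < 0) :
    B (n + 2) < -a n := by
  have : 0 < B (n + 1) * (B (n + 2) + a n) := h n ▸ sq_pos_of_ne_zero hn
  linarith [neg_of_mul_pos_right this hneg.le]

theorem pos (h : DyadicRecurrence a B) (h0 : 0 < B 0) {μ : ℝ} (hμ : 0 < μ) (ha : ∀ n, μ ≤ a n)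
    (hlim : Tendsto B atTop (𝓝 0)) : ∀ n, 0 < B n := by
  by_contra! hnonpos
  obtain ⟨N, hN⟩ := hnonpos
  have hne := h.ne_zero h0.ne'
  obtain ⟨n, rfl⟩ : ∃ n, N = n + 1 := Nat.exists_eq_succ_of_ne_zero (by rintro rfl; linarith)
  have hneg : ∀ m, n ≤ m → B (m + 1) < 0 := by
    intro m hm
    induction m, hm using Nat.le_induction with
    | base => exact hN.lt_of_ne (hne _)
    | succ m _ ih => exact (h.lt_neg_of_neg (hne m) ih).trans (by linarith [ha m])
  obtain ⟨m, hm, hclose⟩ := ((eventually_ge_atTop n).and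
    (((tendsto_add_atTop_iff_nat 2).2 hlim).eventually (lt_mem_nhds (neg_lt_zero.2 hμ)))).exists
  linarith [h.lt_neg_of_neg (hne m) (hneg m hm), ha m]

theorem mul_le_of_mul_sq_le (h : DyadicRecurrence a B) (hpos : ∀ n, 0 < B n) (ha : ∀ n, 0 ≤ a n)
    {n : ℕ} {c : ℝ} (hc : 0 ≤ c) (hsq : c * B n ^ 2 ≤ B (n + 1) ^ 2) :
    c * B (n + 2) ≤ B (n + 1) := by
  have hprod : B (n + 1) * B (n + 2) ≤ B n ^ 2 := by
    rw [h n, mul_add]; exact le_add_of_nonneg_right (mul_nonneg (hpos _).le (ha n))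
  have := mul_le_mul_of_nonneg_left hprod hc
  exact le_of_mul_le_mul_right (by nlinarith) (hpos (n + 1))

theorem mul_le_add (h : DyadicRecurrence a B) (hpos : ∀ n, 0 < B n) {q : ℕ} {P : ℝ}
    (hratio : P * B (q + 1) ≤ B q) : P * B q ≤ B (q + 2) + a q := by
  have hsum : 0 < B (q + 2) + a q :=
    (pos_iff_pos_of_mul_pos (h q ▸ pow_pos (hpos q) 2)).1 (hpos (q + 1))
  refine le_of_mul_le_mul_left ?_ (hpos q)
  calc B q * (P * B q) = (P * B (q + 1)) * (B (q + 2) + a q) := by rw [mul_assoc, ← h q]; ring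
    _ ≤ B q * (B (q + 2) + a q) := by gcongr

theorem le_and_sq_mul_le (h : DyadicRecurrence a B) (hpos : ∀ n, 0 < B n) (ha : ∀ n, 0 ≤ a n)
    {q : ℕ} {P : ℝ} (hq : 1 ≤ B q) (hratio : P * B (q + 1) ≤ B q) (haP : a q ≤ P - 1) :
    B q ≤ B (q + 2) ∧ P ^ 2 * B (q + 3) ≤ B (q + 2) := by
  have hP : 1 ≤ P := by linarith [ha q]
  have hle : B q ≤ B (q + 2) := by
    nlinarith [h.mul_le_add hpos hratio, mul_nonneg (sub_nonneg.2 hP) (sub_nonneg.2 hq)]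
  refine ⟨hle, h.mul_le_of_mul_sq_le hpos ha (n := q + 1) (by positivity) ?_⟩
  have hP0 : 0 ≤ P * B (q + 1) := mul_nonneg (by linarith) (hpos _).le
  calc P ^ 2 * B (q + 1) ^ 2 = (P * B (q + 1)) ^ 2 := by ring
    _ ≤ B q ^ 2 := by gcongr
    _ ≤ B (q + 2) ^ 2 := by gcongr

theorem one_le_of_one_add_mul_le (h : DyadicRecurrence a B) (hpos : ∀ n, 0 < B n)
    (ha : ∀ n, 0 ≤ a n) {m : ℕ} {τ : ℝ} (haτ : ∀ k, a (m + 2 * k) ≤ (1 + τ) ^ 2 ^ k - 1) (h1 : 1 ≤ B m)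
    (hratio : (1 + τ) * B (m + 1) ≤ B m) :
    ∀ k, 1 ≤ B (m + 2 * k) ∧ (1 + τ) ^ 2 ^ k * B (m + 2 * k + 1) ≤ B (m + 2 * k)
  | 0 => by simpa using ⟨h1, hratio⟩
  | k + 1 => by
    obtain ⟨hk1, hkr⟩ := one_le_of_one_add_mul_le h hpos ha haτ h1 hratio k
    obtain ⟨hle, hr⟩ := h.le_and_sq_mul_le hpos ha hk1 hkr (haτ k)
    rw [show m + 2 * (k + 1) = m + 2 * k + 2 by ring, pow_succ, pow_mul]
    exact ⟨hk1.trans hle, hr⟩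

variable {μ : ℝ}

theorem lt_one_add_mul (h : DyadicRecurrence a B) (hpos : ∀ n, 0 < B n) (ha : ∀ n, 0 ≤ a n)
    (haμ : ∀ n, a n ≤ μ * 2 ^ n) (hlim : Tendsto B atTop (𝓝 0)) {m : ℕ} {τ : ℝ} (hτ0 : 0 ≤ τ)
    (hτ4 : τ ≤ 4) (hμ : μ * 2 ^ m ≤ τ ^ 2 / 4) (h1 : 1 ≤ B m) : B m < (1 + τ) * B (m + 1) := by
  by_contra! hratio
  have haτ (k : ℕ) : a (m + 2 * k) ≤ (1 + τ) ^ 2 ^ k - 1 := by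
    have := four_pow_mul_sq_le hτ0 hτ4 k
    calc a (m + 2 * k) ≤ μ * 2 ^ (m + 2 * k) := haμ _
      _ = 4 ^ k * (μ * 2 ^ m) := by rw [pow_add, pow_mul]; ring
      _ ≤ 4 ^ k * (τ ^ 2 / 4) := by gcongr
      _ ≤ (1 + τ) ^ 2 ^ k - 1 := by linarith
  have hsub : Tendsto (fun k => B (m + 2 * k)) atTop (𝓝 0) :=
    hlim.comp (tendsto_atTop_atTop.2 fun b => ⟨b, fun k hk => by omega⟩)
  obtain ⟨k, hk⟩ := (hsub.eventually (gt_mem_nhds one_pos)).exists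
  linarith [(h.one_le_of_one_add_mul_le hpos ha haτ h1 hratio k).1]

theorem lt_one_add_of_abs_sub_one_lt (h : DyadicRecurrence a B) (hpos : ∀ n, 0 < B n)
    (ha : ∀ n, 0 ≤ a n) (haμ : ∀ n, a n ≤ μ * 2 ^ n) (hlim : Tendsto B atTop (𝓝 0)) {t : ℕ}
    {s : ℝ} (hs0 : 0 < s) (hs : s ≤ 1 / 2) (hμ : μ * 2 ^ (t + 1) ≤ s ^ 2 / 4)
    (ht : |B t - 1| < s / 5) : B (t + 1) < 1 + s := by
  by_contra! hge
  refine (h.lt_one_add_mul hpos ha haμ hlim hs0.le (by linarith) hμ (by linarith)).not_ge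
    (h.mul_le_of_mul_sq_le hpos ha (by linarith) ?_)
  have hBt : B t ≤ 1 + s / 5 := by linarith [(abs_lt.1 ht).2]
  calc (1 + s) * B t ^ 2 ≤ (1 + s) * (1 + s / 5) ^ 2 := by gcongr; exact (hpos t).le
    _ ≤ (1 + s) ^ 2 := by nlinarith
    _ ≤ B (t + 1) ^ 2 := by gcongr

theorem one_sub_lt_of_abs_sub_one_lt (h : DyadicRecurrence a B) (hpos : ∀ n, 0 < B n)
    (ha : ∀ n, 0 ≤ a n) (haμ : ∀ n, a n ≤ μ * 2 ^ n) (hlim : Tendsto B atTop (𝓝 0)) {t : ℕ}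
    {s : ℝ} (hs0 : 0 < s) (hs : s ≤ 1 / 2) (hμ : μ * 2 ^ (t + 2) ≤ s ^ 2 / 64)
    (ht : |B t - 1| < s / 5) : 1 - s < B (t + 1) := by
  by_contra! hle
  have hBt : 1 - s / 5 ≤ B t := by linarith [(abs_lt.1 ht).1]
  have hat : a t ≤ s ^ 2 / 256 := by
    have := haμ t
    rw [pow_add] at hμ
    nlinarith [(by positivity : (0 : ℝ) < 2 ^ t)]
  have hbig : 1 + s / 4 ≤ B (t + 2) := by
    have hsq : (1 - s / 5) ^ 2 ≤ B t ^ 2 := by gcongr; linarith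
    rw [h t] at hsq
    nlinarith [hpos (t + 1), hpos (t + 2), ha t]
  refine (h.lt_one_add_mul hpos ha haμ hlim (m := t + 2) (τ := s / 4) (by linarith) (by linarith)
    (by linarith) (by linarith)).not_ge (h.mul_le_of_mul_sq_le hpos ha (by linarith) ?_)
  calc (1 + s / 4) * B (t + 1) ^ 2 ≤ (1 + s / 4) * (1 - s) ^ 2 := by gcongr; exact (hpos _).le
    _ ≤ (1 + s / 4) ^ 2 := by nlinarith
    _ ≤ B (t + 2) ^ 2 := by gcongr

theorem abs_sub_one_lt_five_pow_mul (h : DyadicRecurrence a B) (hB0 : B 0 = 1)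
    (hpos : ∀ n, 0 < B n) (ha : ∀ n, 0 ≤ a n) (haμ : ∀ n, a n ≤ μ * 2 ^ n)
    (hlim : Tendsto B atTop (𝓝 0)) {η : ℝ} {N : ℕ} (hη : 0 < η) (hN : 5 ^ N * η ≤ 1 / 2)
    (hμ : μ * 2 ^ (N + 1) ≤ η ^ 2 / 64) : ∀ i ≤ N, |B i - 1| < 5 ^ i * η := by
  have hμ0 : 0 ≤ μ := by simpa using (ha 0).trans (haμ 0)
  intro i
  induction i with
  | zero => intro; simpa [hB0] using hη
  | succ i ih =>
    intro hi
    set s := 5 ^ (i + 1) * η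
    have hηs : η ≤ s := le_mul_of_one_le_left hη.le (one_le_pow₀ (by norm_num))
    have hs : s ≤ 1 / 2 :=
      (mul_le_mul_of_nonneg_right (pow_le_pow_right₀ (by norm_num) hi) hη.le).trans hN
    have hμs : μ * 2 ^ (i + 2) ≤ s ^ 2 / 64 := by
      have : (2 : ℝ) ^ (i + 2) ≤ 2 ^ (N + 1) := pow_le_pow_right₀ one_le_two (by omega)
      nlinarith
    have ht : |B i - 1| < s / 5 := by
      rw [show s / 5 = 5 ^ i * η by simp only [s]; ring]; exact ih (by omega)
    have hμs' : μ * 2 ^ (i + 1) ≤ s ^ 2 / 4 := by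
      have : 0 ≤ μ * 2 ^ (i + 1) := by positivity
      rw [pow_succ 2 (i + 1)] at hμs
      nlinarith
    rw [abs_sub_lt_iff]
    constructor
    · linarith [h.lt_one_add_of_abs_sub_one_lt hpos ha haμ hlim (by positivity) hs hμs' ht]
    · linarith [h.one_sub_lt_of_abs_sub_one_lt hpos ha haμ hlim (by positivity) hs hμs ht]

end DyadicRecurrence

theorem stmt_6 (c β : ℝ) (hc : c ∈ Set.Ioc (3 / 2 : ℝ) (5 / 2))
    (hβ : β = 2 * (1 - c / 3)) :
    ∀ j : ℕ, ∀ ε : ℝ, 0 < ε → ∃ δ : ℝ, 0 < δ ∧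
      ∀ μ : ℝ, 0 < μ → μ < δ →
        ∀ A : ℕ → ℝ, SteadyState β μ A → Tendsto A atTop (nhds 0) →
          |A j - 1| < ε := by
  have hweight := two_rpow_mul_natCast_mem_Icc (β := β) (by rw [hβ]; linarith [hc.2])
    (by rw [hβ]; linarith [hc.1])
  intro j ε hε
  set η := min ε (1 / 2) / 5 ^ (j + 1) with hη
  have hη0 : 0 < η := by positivity
  refine ⟨η ^ 2 / (64 * 2 ^ (j + 2)), by positivity, fun μ hμ hμδ A hA hlim => ?_⟩
  have hlimB : Tendsto (prependOne A) atTop (𝓝 0) := (tendsto_add_atTop_iff_nat 1).1 hlim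
  have ha (n : ℕ) : μ ≤ μ * (2 : ℝ) ^ (β * n) := le_mul_of_one_le_right hμ.le (hweight n).1
  have haμ (n : ℕ) : μ * (2 : ℝ) ^ (β * n) ≤ μ * 2 ^ n :=
    mul_le_mul_of_nonneg_left (hweight n).2 hμ.le
  have hpos := hA.dyadicRecurrence.pos one_pos hμ ha hlimB
  have hN : 5 ^ (j + 1) * η ≤ 1 / 2 := by
    rw [hη, mul_div_cancel₀ _ (by positivity)]; exact min_le_right _ _
  have hμN : μ * 2 ^ (j + 1 + 1) ≤ η ^ 2 / 64 := by
    rw [lt_div_iff₀ (by positivity)] at hμδ; linarith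
  have := hA.dyadicRecurrence.abs_sub_one_lt_five_pow_mul rfl hpos (fun n => hμ.le.trans (ha n))
    haμ hlimB hη0 hN hμN (j + 1) le_rfl
  rw [hη, mul_div_cancel₀ _ (by positivity)] at this
  exact this.trans_le (min_le_left _ _)
end

section
/- Let c ∈ (3/2, 5/2] and set β = 2(1 − c/3) (so 0 < β < 1). Then there exists γ ∈ (0, 1), depending only on c, such that for every μ > 0, every solution (A_j)_{j≥0} of the rescaled steady-state system with parameter μ satisfying A_j → 0 as j → ∞, and every j ≥ 0, one has A_{j+1} / (A_j + A_{j+1}^{1/2} A_{j+2}^{1/2}) < (1 − γ) 2^{−β/2}. -/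
/-!
Positivity comes from `A_k² = A_{k+1} (A_{k+2} + μ 2^{β(k+1)})`: the factor in brackets is
positive as soon as `A_{k+2} > -μ`, which holds in the tail since `A → 0`, and then positivity
propagates down to `A_0` (via `A_0 (μ + A_1) = 1`). Once `A_k < μ`, the same identity gives
`A_{k+1} < A_k`; and because `2^β < 2`, a decrease at `k + 2` forces one at `k`, so `A` is
strictly decreasing. Combining two consecutive equations gives
`2^β A_j² A_{j+2} - A_{j+1}³ = A_{j+1} A_{j+2} (2^β A_{j+2} - A_{j+3}) > 0`, i.e.
`√(A_{j+1} A_{j+2}) > A_{j+1}² / (q A_j)` with `q = 2^{β/2}`, and then the quotient is below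
`q A_j A_{j+1} / (q A_j² + A_{j+1}²) ≤ q / (q + 1)`, which is `(1 - γ) 2^{-β/2}` for
`γ = 1 - 2^β / (q + 1)`.
-/

open Filter Topology

theorem Nat.forall_of_eventually_of_add_imp {P : ℕ → Prop} {s : ℕ} (hs : 0 < s)
    (hP : ∀ᶠ n in atTop, P n) (hstep : ∀ n, P (n + s) → P n) (n : ℕ) : P n := by
  obtain ⟨N, hN⟩ := eventually_atTop.1 hP
  have hdown : ∀ m, P (n + s * m) → P n := by
    intro m
    induction m with
    | zero => simp
    | succ m ih => exact fun h => ih (hstep _ (by rwa [mul_add, mul_one, ← add_assoc] at h))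
  exact hdown N (hN _ (by nlinarith))

section Recurrence

variable {a b c d m r : ℝ}

theorem lt_of_sq_sub_mul_eq (ha : 0 < a) (hb : 0 < b) (hc : 0 < c) (hm : 0 < m) (hr : r < 2)
    (h₁ : a ^ 2 - b * c = m * b) (h₂ : b ^ 2 - c * d = r * m * c) (hdc : d < c) : b < a := by
  by_contra! hab
  have hmbc : m ≤ b - c := by nlinarith
  have hbc : m * (b + c) < r * m * c := by nlinarith
  have hbrc : b + c < r * c := lt_of_mul_lt_mul_left (by linarith) hm.le
  nlinarith

theorem cube_lt_of_sq_sub_mul_eq (hb : 0 < b) (hc : 0 < c) (hr : 1 ≤ r)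
    (h₁ : a ^ 2 - b * c = m * b) (h₂ : b ^ 2 - c * d = r * m * c) (hdc : d < c) :
    b ^ 3 < r * a ^ 2 * c := by
  have hid : r * a ^ 2 * c - b ^ 3 = b * c * (r * c - d) := by
    linear_combination (r * c) * h₁ - b * h₂
  have : 0 < b * c * (r * c - d) := mul_pos (mul_pos hb hc) (by nlinarith)
  linarith

theorem div_add_sqrt_mul_sqrt_lt {q : ℝ} (hq : 1 ≤ q) (hb : 0 < b) (hba : b < a)
    (h : b ^ 3 < q ^ 2 * a ^ 2 * c) : b / (a + √b * √c) < q / (q + 1) := by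
  have ha : 0 < a := hb.trans hba
  have hsqrt : b ^ 2 / (q * a) < √b * √c := by
    rw [← Real.sqrt_mul hb.le, Real.lt_sqrt (by positivity), div_pow,
      div_lt_iff₀ (by positivity)]
    nlinarith [mul_lt_mul_of_pos_left h hb]
  calc b / (a + √b * √c) < b / (a + b ^ 2 / (q * a)) :=
        div_lt_div_of_pos_left hb (by positivity) (by linarith)
    _ = q * a * b / (q * a ^ 2 + b ^ 2) := by field_simp
    _ ≤ q / (q + 1) := by
        rw [div_le_div_iff₀ (by positivity) (by linarith)]
        nlinarith [mul_nonneg (sub_nonneg.2 hba.le) (by nlinarith : 0 ≤ q * a - b)]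

end Recurrence

namespace SteadyState

variable {β μ : ℝ} {A : ℕ → ℝ}

theorem two_rpow_succ (β : ℝ) (k : ℕ) :
    (2 : ℝ) ^ (β * (((k + 1 : ℕ) : ℝ) + 1)) = 2 ^ β * 2 ^ (β * ((k : ℝ) + 1)) := by
  rw [← Real.rpow_add two_pos]
  push_cast
  ring_nf

theorem one_le_two_rpow (hβ : 0 ≤ β) (k : ℕ) : 1 ≤ (2 : ℝ) ^ (β * ((k : ℝ) + 1)) :=
  Real.one_le_rpow one_le_two (by positivity)

theorem sq_eq_mul (h : SteadyState β μ A) (k : ℕ) :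
    A k ^ 2 = A (k + 1) * (A (k + 2) + μ * 2 ^ (β * ((k : ℝ) + 1))) := by
  linear_combination h.1 k

theorem sq_sub_mul_succ (h : SteadyState β μ A) (k : ℕ) :
    A (k + 1) ^ 2 - A (k + 2) * A (k + 3) =
      2 ^ β * (μ * 2 ^ (β * ((k : ℝ) + 1))) * A (k + 2) := by
  rw [h.1 (k + 1), two_rpow_succ]
  ring

theorem ne_zero (h : SteadyState β μ A) (k : ℕ) : A k ≠ 0 := by
  have hzero : ∀ k, A k = 0 → A 0 = 0 := by
    intro k
    induction k with
    | zero => exact id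
    | succ k ih =>
      intro hk
      exact ih (pow_eq_zero_iff two_ne_zero |>.1 (by simpa [hk] using h.1 k))
  intro hk
  have := h.2
  simp [hzero k hk] at this

theorem pos_succ_of_neg_lt (h : SteadyState β μ A) (k : ℕ)
    (hk : -(μ * 2 ^ (β * ((k : ℝ) + 1))) < A (k + 2)) : 0 < A (k + 1) := by
  have hsq : 0 < A k ^ 2 := sq_pos_of_ne_zero (h.ne_zero k)
  rw [h.sq_eq_mul k] at hsq
  exact pos_of_mul_pos_left hsq (by linarith)

theorem pos (h : SteadyState β μ A) (hμ : 0 < μ) (hβ : 0 ≤ β) (hA : Tendsto A atTop (𝓝 0))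
    (k : ℕ) : 0 < A k := by
  have hμw (k : ℕ) : μ ≤ μ * 2 ^ (β * ((k : ℝ) + 1)) :=
    le_mul_of_one_le_right hμ.le (one_le_two_rpow hβ k)
  have htail : ∀ᶠ k in atTop, 0 < A (k + 1) := by
    filter_upwards [(tendsto_add_atTop_nat 2).eventually (hA.eventually (eventually_gt_nhds
      (neg_neg_of_pos hμ)))] with k hk
    exact h.pos_succ_of_neg_lt k (by linarith [hμw k])
  have hsucc : ∀ k, 0 < A (k + 1) :=
    Nat.forall_of_eventually_of_add_imp one_pos htail fun k hk =>
      h.pos_succ_of_neg_lt k (by linarith [hμw k])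
  cases k with
  | zero => nlinarith [h.2, hsucc 0]
  | succ k => exact hsucc k

theorem succ_lt_of_lt (h : SteadyState β μ A) (hβ : 0 ≤ β) (hpos : ∀ k, 0 < A k) (k : ℕ)
    (hk : A k < μ) : A (k + 1) < A k := by
  have hμw : μ ≤ μ * 2 ^ (β * ((k : ℝ) + 1)) :=
    le_mul_of_one_le_right ((hpos k).le.trans hk.le) (one_le_two_rpow hβ k)
  nlinarith [h.sq_eq_mul k, hpos k, hpos (k + 1), hpos (k + 2)]

theorem strictAnti (h : SteadyState β μ A) (hμ : 0 < μ) (hβ₀ : 0 ≤ β) (hβ₁ : β < 1)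
    (hA : Tendsto A atTop (𝓝 0)) : StrictAnti A := by
  have hpos := h.pos hμ hβ₀ hA
  have hr : (2 : ℝ) ^ β < 2 := by
    simpa using Real.rpow_lt_rpow_of_exponent_lt one_lt_two hβ₁
  refine strictAnti_nat_of_succ_lt (Nat.forall_of_eventually_of_add_imp two_pos ?_ ?_)
  · filter_upwards [hA.eventually (eventually_lt_nhds hμ)] with k hk
    exact h.succ_lt_of_lt hβ₀ hpos k hk
  · intro k hk
    exact lt_of_sq_sub_mul_eq (hpos k) (hpos (k + 1)) (hpos (k + 2))
      (mul_pos hμ (Real.rpow_pos_of_pos two_pos _)) hr (h.1 k) (h.sq_sub_mul_succ k) hk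

theorem cube_lt (h : SteadyState β μ A) (hβ : 0 ≤ β) (hpos : ∀ k, 0 < A k) (hanti : StrictAnti A)
    (k : ℕ) : A (k + 1) ^ 3 < 2 ^ β * A k ^ 2 * A (k + 2) :=
  cube_lt_of_sq_sub_mul_eq (hpos (k + 1)) (hpos (k + 2)) (Real.one_le_rpow one_le_two hβ)
    (h.1 k) (h.sq_sub_mul_succ k) (hanti (k + 2).lt_succ_self)

end SteadyState

theorem stmt_7 (c β : ℝ) (hc : c ∈ Set.Ioc (3 / 2 : ℝ) (5 / 2))
    (hβ : β = 2 * (1 - c / 3)) :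
    ∃ γ : ℝ, 0 < γ ∧ γ < 1 ∧
      ∀ μ : ℝ, 0 < μ →
        ∀ A : ℕ → ℝ, SteadyState β μ A → Tendsto A atTop (nhds 0) →
          ∀ j : ℕ,
            A (j + 1) / (A j + Real.sqrt (A (j + 1)) * Real.sqrt (A (j + 2)))
              < (1 - γ) * (2 : ℝ) ^ (-(β / 2)) := by
  obtain ⟨hc₁, hc₂⟩ := hc
  have hβ₀ : 0 ≤ β := by rw [hβ]; linarith
  have hβ₁ : β < 1 := by rw [hβ]; linarith
  set q : ℝ := (2 : ℝ) ^ (β / 2)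
  have hq : 1 ≤ q := Real.one_le_rpow one_le_two (by linarith)
  have hq_sq : q ^ 2 = 2 ^ β := by rw [← Real.rpow_natCast, ← Real.rpow_mul zero_le_two]; ring_nf
  have hq_sq_lt : q ^ 2 < 2 := by
    simpa [hq_sq] using Real.rpow_lt_rpow_of_exponent_lt one_lt_two hβ₁
  refine ⟨1 - q ^ 2 / (q + 1), ?_, ?_, fun μ hμ A hA hlim j => ?_⟩
  · rw [sub_pos, div_lt_one (by linarith)]; linarith
  · have : 0 < q ^ 2 / (q + 1) := by positivity
    linarith
  have hpos := hA.pos hμ hβ₀ hlim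
  have hanti := hA.strictAnti hμ hβ₀ hβ₁ hlim
  have hrhs : (1 - (1 - q ^ 2 / (q + 1))) * (2 : ℝ) ^ (-(β / 2)) = q / (q + 1) := by
    rw [show (2 : ℝ) ^ (-(β / 2)) = q⁻¹ from Real.rpow_neg zero_le_two _]
    field_simp
    ring
  rw [hrhs]
  exact div_add_sqrt_mul_sqrt_lt hq (hpos (j + 1)) (hanti j.lt_succ_self)
    (hq_sq ▸ hA.cube_lt hβ₀ hpos hanti j)
end

section
/- For every real β with 0 < β < 1, one has the strict inequality 1 / (1 − 2^{β−1} + √(1 + 2^{2(β−1)})) < 2^{−β/2}. -/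
theorem stmt_8 (β : ℝ) (h0 : 0 < β) (h1 : β < 1) :
    1 / (1 - (2 : ℝ) ^ (β - 1) + Real.sqrt (1 + (2 : ℝ) ^ (2 * (β - 1))))
      < (2 : ℝ) ^ (-(β / 2)) := by
  set s : ℝ := (2 : ℝ) ^ (β / 2) with hs
  have h2 : (0:ℝ) < 2 := by norm_num
  have hspos : 0 < s := Real.rpow_pos_of_pos h2 _
  have hs1 : 1 < s := by
    rw [hs, show (1:ℝ) = (2:ℝ) ^ (0:ℝ) by simp]
    exact Real.rpow_lt_rpow_of_exponent_lt (by norm_num) (by linarith)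
  have hsq : s ^ 2 = (2:ℝ) ^ β := by
    rw [hs, ← Real.rpow_natCast, ← Real.rpow_mul (by norm_num)]
    norm_num
  have hs2 : s ^ 2 < 2 := by
    rw [hsq]
    calc (2:ℝ) ^ β < (2:ℝ) ^ (1:ℝ) :=
          Real.rpow_lt_rpow_of_exponent_lt (by norm_num) h1
      _ = 2 := Real.rpow_one 2
  have e1 : (2:ℝ) ^ (β - 1) = s ^ 2 / 2 := by
    rw [hsq, Real.rpow_sub h2, Real.rpow_one]
  have e2 : (2:ℝ) ^ (2 * (β - 1)) = s ^ 4 / 4 := by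
    have : s ^ 4 = ((2:ℝ) ^ (β - 1)) ^ 2 * 4 := by
      rw [e1]; ring
    rw [show (2:ℝ) ^ (2 * (β-1)) = ((2:ℝ) ^ (β-1)) ^ 2 by
      rw [← Real.rpow_natCast ((2:ℝ)^(β-1)), ← Real.rpow_mul (by norm_num)]
      norm_num; ring_nf]
    rw [this]; ring
  have e3 : (2:ℝ) ^ (-(β / 2)) = 1 / s := by
    rw [hs, Real.rpow_neg (by norm_num), one_div]
  rw [e1, e2, e3]
  set r : ℝ := Real.sqrt (1 + s ^ 4 / 4) with hr
  have hrnn : 0 ≤ r := Real.sqrt_nonneg _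
  have hrsq : r ^ 2 = 1 + s ^ 4 / 4 := Real.sq_sqrt (by positivity)
  have hr1 : 1 ≤ r := by
    nlinarith [sq_nonneg s, sq_nonneg (r - 1)]
  have hD : 0 < 1 - s ^ 2 / 2 + r := by nlinarith
  rw [div_lt_div_iff₀ hD hspos, one_mul, one_mul]
  -- need s < 1 - s^2/2 + r, i.e. s - 1 + s^2/2 < r
  nlinarith [sq_nonneg (r - (s - 1 + s^2/2)), mul_pos hspos (sub_pos.mpr hs2)]
end

section
/- Let 0 < β < 1, let y, z be real numbers with 0 < y ≤ 1, z ≥ 0, and y·z < 2^{β−1}. Then y / (1 − z + √(y² + z²)) ≤ y² / (y − 2^{β−1} + √(y⁴ + 2^{2(β−1)})) ≤ 1 / (1 − 2^{β−1} + √(1 + 2^{2(β−1)})). (In particular, the function h(y) = y² / (y − 2^{β−1} + √(y⁴ + 2^{2(β−1)})) is nondecreasing on (0,1], attaining its maximum over (0,1] at y = 1.) -/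
private lemma sqrt_shift (a w c : ℝ) (ha : 0 ≤ a) (hw : 0 ≤ w) (hwc : w ≤ c) :
    Real.sqrt (a + c ^ 2) + w ≤ Real.sqrt (a + w ^ 2) + c := by
  have hc : 0 ≤ c := le_trans hw hwc
  have h1 : Real.sqrt (a + c ^ 2) ^ 2 = a + c ^ 2 := Real.sq_sqrt (by positivity)
  have h2 : Real.sqrt (a + w ^ 2) ^ 2 = a + w ^ 2 := Real.sq_sqrt (by positivity)
  have h3 : 0 ≤ Real.sqrt (a + c ^ 2) := Real.sqrt_nonneg _
  have h4 : 0 ≤ Real.sqrt (a + w ^ 2) := Real.sqrt_nonneg _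
  have h5 : c ≤ Real.sqrt (a + c ^ 2) := (Real.le_sqrt hc (by positivity)).mpr (by nlinarith)
  have h6 : w ≤ Real.sqrt (a + w ^ 2) := (Real.le_sqrt hw (by positivity)).mpr (by nlinarith)
  nlinarith [mul_nonneg (sub_nonneg.2 hwc) (add_nonneg h3 h4),
    sq_nonneg (Real.sqrt (a + c ^ 2) - Real.sqrt (a + w ^ 2)),
    mul_nonneg (sub_nonneg.2 hwc) hc]

private lemma Hpos (y c : ℝ) (hy0 : 0 ≤ y) (hy1 : y ≤ 1) (hc0 : 1/2 ≤ c) (hc1 : c ≤ 1) :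
    0 ≤ 2*c - y - 2*y*c + 2*y*c^2 - y*c^3 + 3*y^2 - 4*y^2*c + 3*y^2*c^2 - y^2*c^3 := by
  have t1 : 0 ≤ (2*c-1) * (1 - y) := mul_nonneg (by linarith) (by linarith)
  have t2 : 0 ≤ (2*c-1) * (1 - y^2) := mul_nonneg (by linarith) (by nlinarith)
  have t3 : 0 ≤ y * (2*c-1)^2 * (1 - (2*c-1)) :=
    mul_nonneg (mul_nonneg hy0 (sq_nonneg _)) (by linarith)
  have t4 : 0 ≤ y^2 * (2*c-1)^2 * (1 - (2*c-1)) :=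
    mul_nonneg (mul_nonneg (sq_nonneg y) (sq_nonneg _)) (by linarith)
  have t5 : 0 ≤ y^2 * (2*c-1)^2 := mul_nonneg (sq_nonneg y) (sq_nonneg _)
  linarith [sq_nonneg (2*y - 1), t1, t2, t3, t4, t5]

set_option maxHeartbeats 1600000 in
theorem stmt_9 (β y z : ℝ) (h0 : 0 < β) (h1 : β < 1)
    (hy0 : 0 < y) (hy1 : y ≤ 1) (hz : 0 ≤ z)
    (hyz : y * z < (2 : ℝ) ^ (β - 1)) :
    y / (1 - z + Real.sqrt (y ^ 2 + z ^ 2))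
        ≤ y ^ 2 / (y - (2 : ℝ) ^ (β - 1) + Real.sqrt (y ^ 4 + (2 : ℝ) ^ (2 * (β - 1)))) ∧
    y ^ 2 / (y - (2 : ℝ) ^ (β - 1) + Real.sqrt (y ^ 4 + (2 : ℝ) ^ (2 * (β - 1))))
        ≤ 1 / (1 - (2 : ℝ) ^ (β - 1) + Real.sqrt (1 + (2 : ℝ) ^ (2 * (β - 1)))) := by
  have hc2 : (2:ℝ) ^ (2 * (β - 1)) = ((2:ℝ) ^ (β - 1)) ^ 2 := by
    rw [two_mul, Real.rpow_add (by norm_num), sq]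
  rw [hc2]
  set c : ℝ := (2:ℝ) ^ (β - 1) with hcdef
  have hc1 : c < 1 := Real.rpow_lt_one_of_one_lt_of_neg one_lt_two (by linarith)
  have hchalf : (1:ℝ)/2 < c := by
    have h := Real.rpow_lt_rpow_of_exponent_lt (x := 2) one_lt_two
      (show (-1:ℝ) < β - 1 by linarith)
    rwa [Real.rpow_neg_one, show ((2:ℝ))⁻¹ = 1/2 by norm_num] at h
  have hcpos : (0:ℝ) < c := by linarith
  set s1 := Real.sqrt (y ^ 2 + z ^ 2) with hs1def
  set s2 := Real.sqrt (y ^ 4 + c ^ 2) with hs2def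
  set s3 := Real.sqrt (1 + c ^ 2) with hs3def
  have hs1sq : s1 ^ 2 = y ^ 2 + z ^ 2 := Real.sq_sqrt (by positivity)
  have hs2sq : s2 ^ 2 = y ^ 4 + c ^ 2 := Real.sq_sqrt (by positivity)
  have hs3sq : s3 ^ 2 = 1 + c ^ 2 := Real.sq_sqrt (by positivity)
  have hs1z : z ≤ s1 := (Real.le_sqrt hz (by positivity)).mpr (by nlinarith)
  have hs2c : c ≤ s2 := (Real.le_sqrt hcpos.le (by positivity)).mpr (by nlinarith)
  have hs3c : c ≤ s3 := (Real.le_sqrt hcpos.le (by positivity)).mpr (by nlinarith)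
  have hD1 : 0 < 1 - z + s1 := by linarith
  have hD2 : 0 < y - c + s2 := by linarith
  have hD3 : 0 < 1 - c + s3 := by linarith
  constructor
  · rw [div_le_div_iff₀ hD1 hD2]
    have hw : 0 ≤ y * z := mul_nonneg hy0.le hz
    have hys1 : y * s1 = Real.sqrt (y ^ 4 + (y * z) ^ 2) := by
      rw [hs1def, show y ^ 4 + (y * z) ^ 2 = y ^ 2 * (y ^ 2 + z ^ 2) by ring,
        Real.sqrt_mul (sq_nonneg y), Real.sqrt_sq hy0.le]
    have key := sqrt_shift (y ^ 4) (y * z) c (by positivity) hw hyz.le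
    rw [← hys1] at key
    nlinarith [mul_le_mul_of_nonneg_left key hy0.le]
  · rw [div_le_div_iff₀ hD2 hD3]
    have hs3le : s3 ≤ 1 + c ^ 2 / 2 := by
      rw [hs3def, show (1 + c ^ 2 : ℝ) = (1 + c^2) by ring]
      calc Real.sqrt (1 + c ^ 2) ≤ Real.sqrt ((1 + c ^ 2 / 2) ^ 2) :=
            Real.sqrt_le_sqrt (by nlinarith)
        _ = 1 + c ^ 2 / 2 := Real.sqrt_sq (by positivity)
    have hs3nn : 0 ≤ s3 := Real.sqrt_nonneg _
    have h7 : 0 ≤ c + c * y - y := by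
      nlinarith [mul_nonneg (show (0:ℝ) ≤ c - 1/2 by linarith) hy0.le]
    have hE : 0 ≤ c - y + y ^ 2 - c * y ^ 2 := by
      nlinarith [mul_nonneg (show (0:ℝ) ≤ 1 - y by linarith) h7]
    have hH : 0 ≤ y * (1 - y) * (2*c - y - 2*y*c + 2*y*c^2 - y*c^3
        + 3*y^2 - 4*y^2*c + 3*y^2*c^2 - y^2*c^3) :=
      mul_nonneg (mul_nonneg hy0.le (by linarith))
        (Hpos y c hy0.le hy1 hchalf.le hc1.le)
    have hkey : y ^ 2 * s3 + (c - y + y ^ 2 - c * y ^ 2) ≤ s2 := by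
      have hnn : 0 ≤ y ^ 2 * s3 + (c - y + y ^ 2 - c * y ^ 2) :=
        add_nonneg (mul_nonneg (sq_nonneg y) hs3nn) hE
      rw [hs2def]
      refine (Real.le_sqrt hnn (by positivity)).mpr ?_
      have f1 : y ^ 4 * s3 ^ 2 = y ^ 4 * (1 + c ^ 2) := by rw [hs3sq]
      have f2 : 0 ≤ y ^ 2 * (c - y + y ^ 2 - c * y ^ 2) * (1 + c ^ 2 / 2 - s3) :=
        mul_nonneg (mul_nonneg (sq_nonneg y) hE) (by linarith)
      nlinarith [f1, f2, hH]
    linarith [hkey]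
end
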